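/- The precision meet on gradual types is associative as a partial operation: (G1 ⊓ G2) ⊓ G3 is defined iff G1 ⊓ (G2 ⊓ G3) is defined, and when defined they are equal. Consequently, consistent transitivity of evidence (represented as single gradual types combined by meet) is associative. -/

import Mathlib

inductive GType : Type
  | int
  | bool
  | unk
  | arrow (a b : GType)
deriving DecidableEq

/-- Consistency on gradual types. -/
inductive Consist : GType → GType → Prop
  | unkL (G : GType) : Consist GType.unk G
  | unkR (G : GType) : Consist G GType.unk
  | int : Consist GType.int GType.int
  | bool : Consist GType.bool GType.bool
  | arrow {a a' b b' : GType} : Consist a a' → Consist b b' →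
      Consist (GType.arrow a b) (GType.arrow a' b')

/-- Partial precision meet on gradual types. -/
def gmeet : GType → GType → Option GType
  | g, GType.unk => some g
  | GType.unk, g => some g
  | GType.int, GType.int => some GType.int
  | GType.bool, GType.bool => some GType.bool
  | GType.arrow a b, GType.arrow a' b' =>
      match gmeet a a', gmeet b b' with
      | some x, some y => some (GType.arrow x y)
      | _, _ => none
  | _, _ => none

/-!
Order gradual types by precision, `G ⊑ H` meaning that `G` is at least as precise as `H`,
so that `?` is the top element. `gmeet A B` is then the greatest lower bound of `A` and `B`
in the strong sense that the types below it are exactly the common lower bounds of `A` and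
`B`; in particular it is undefined exactly when there is no common lower bound. Hence both
bracketings of the triple meet have as lower bounds exactly the common lower bounds of
`G1`, `G2`, `G3`, and by reflexivity and antisymmetry an optional type is determined by its
lower bounds.
-/

namespace GType

inductive Prec : GType → GType → Prop
  | unk (G : GType) : Prec G unk
  | int : Prec int int
  | bool : Prec bool bool
  | arrow {a a' b b' : GType} : Prec a a' → Prec b b' → Prec (arrow a b) (arrow a' b')

local infix:50 " ⊑ " => Prec

attribute [simp] Prec.unk

@[simp]
theorem Prec.refl : ∀ G : GType, G ⊑ G
  | .int => .int
  | .bool => .bool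
  | .unk => .unk GType.unk
  | .arrow a b => .arrow (Prec.refl a) (Prec.refl b)

@[simp]
theorem unk_prec_iff {G : GType} : unk ⊑ G ↔ G = unk :=
  ⟨fun h => by cases h; rfl, fun h => h ▸ .unk unk⟩

@[simp]
theorem prec_int_iff {G : GType} : G ⊑ int ↔ G = int :=
  ⟨fun h => by cases h; rfl, fun h => h ▸ .int⟩

@[simp]
theorem prec_bool_iff {G : GType} : G ⊑ bool ↔ G = bool :=
  ⟨fun h => by cases h; rfl, fun h => h ▸ .bool⟩

@[simp]
theorem prec_arrow_iff {G a b : GType} :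
    G ⊑ arrow a b ↔ ∃ x y, G = arrow x y ∧ x ⊑ a ∧ y ⊑ b :=
  ⟨fun h => by cases h; exact ⟨_, _, rfl, by assumption, by assumption⟩,
    fun ⟨_, _, hG, ha, hb⟩ => hG ▸ .arrow ha hb⟩

theorem Prec.antisymm {G H : GType} (h : G ⊑ H) (h' : H ⊑ G) : G = H := by
  induction h with
  | unk G => exact unk_prec_iff.mp h'
  | int | bool => rfl
  | arrow _ _ iha ihb =>
    cases h' with
    | arrow ha hb => rw [iha ha, ihb hb]

theorem eq_of_forall_exists_mem_prec_iff {o o' : Option GType}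
    (h : ∀ G, (∃ M ∈ o, G ⊑ M) ↔ (∃ M ∈ o', G ⊑ M)) : o = o' := by
  rcases o with _ | M <;> rcases o' with _ | M'
  · rfl
  · simpa using (h M').mpr ⟨M', rfl, .refl M'⟩
  · simpa using (h M).mp ⟨M, rfl, .refl M⟩
  · obtain ⟨_, ⟨⟩, hMM'⟩ := (h M).mp ⟨M, rfl, .refl M⟩
    obtain ⟨_, ⟨⟩, hM'M⟩ := (h M').mpr ⟨M', rfl, .refl M'⟩
    rw [hMM'.antisymm hM'M]

theorem gmeet_arrow_arrow (a b a' b' : GType) :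
    gmeet (arrow a b) (arrow a' b') = Option.map₂ arrow (gmeet a a') (gmeet b b') := by
  simp only [gmeet]
  cases gmeet a a' <;> cases gmeet b b' <;> rfl

theorem exists_mem_map₂_arrow_prec_iff {G : GType} {o o' : Option GType} :
    (∃ M ∈ Option.map₂ arrow o o', G ⊑ M) ↔
      ∃ x y, G = arrow x y ∧ (∃ M ∈ o, x ⊑ M) ∧ (∃ N ∈ o', y ⊑ N) := by
  cases o <;> cases o' <;> simp

theorem exists_mem_gmeet_prec_iff (A B G : GType) :
    (∃ M ∈ gmeet A B, G ⊑ M) ↔ G ⊑ A ∧ G ⊑ B := by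
  induction A generalizing B G with
  | arrow a b iha ihb =>
    cases B with
    | arrow a' b' =>
      simp only [gmeet_arrow_arrow, exists_mem_map₂_arrow_prec_iff, iha, ihb, prec_arrow_iff]
      grind
    | _ => cases G <;> simp [gmeet]
  | _ => cases B <;> cases G <;> simp [gmeet]

theorem exists_mem_bind_gmeet_left_prec_iff (A B C G : GType) :
    (∃ M ∈ (gmeet A B).bind (gmeet · C), G ⊑ M) ↔ (G ⊑ A ∧ G ⊑ B) ∧ G ⊑ C := by
  rw [← exists_mem_gmeet_prec_iff A B]
  cases gmeet A B with
  | none => simp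
  | some N => simpa using exists_mem_gmeet_prec_iff N C G

theorem exists_mem_bind_gmeet_right_prec_iff (A B C G : GType) :
    (∃ M ∈ (gmeet B C).bind (gmeet A ·), G ⊑ M) ↔ G ⊑ A ∧ G ⊑ B ∧ G ⊑ C := by
  rw [← exists_mem_gmeet_prec_iff B C]
  cases gmeet B C with
  | none => simp
  | some N => simpa using exists_mem_gmeet_prec_iff A N G

end GType

/-- The meet (consistent transitivity of evidence) is associative as a partial
operation: both sides are defined simultaneously and agree when defined. -/
theorem meet_assoc :
    ∀ G1 G2 G3 : GType,
      (Option.bind (gmeet G1 G2) (fun G => gmeet G G3)) =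
      (Option.bind (gmeet G2 G3) (fun G => gmeet G1 G)) := by
  intro G1 G2 G3
  refine GType.eq_of_forall_exists_mem_prec_iff fun G => ?_
  rw [GType.exists_mem_bind_gmeet_left_prec_iff, GType.exists_mem_bind_gmeet_right_prec_iff,
    and_assoc]
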